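/- For monomial ideals $I, J \subseteq S$, the expansion operator satisfies $(I : J)^* = I^* : J^*$. -/

import Mathlib

open MvPolynomial

/-- The monomial ideal of `S = K[x_1,…,x_n]` generated by the monomials `x^a`, `a ∈ A`. -/
noncomputable def monIdeal (K : Type*) [Field K] {n : ℕ} (A : Set (Fin n → ℕ)) :
    Ideal (MvPolynomial (Fin n) K) :=
  Ideal.span ((fun a => ∏ j, (X j : MvPolynomial (Fin n) K) ^ a j) '' A)

/-- The expansion `I^* = ∑_{a ∈ A} P_1^{a(1)} ⋯ P_n^{a(n)} ⊆ S^*` of the monomial ideal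
generated by the monomials `x^a`, `a ∈ A`, with respect to the tuple `(i_1,…,i_n)`;
here `P_j = (x_{j1},…,x_{j i_j})`. -/
noncomputable def expIdeal (K : Type*) [Field K] {n : ℕ} (iv : Fin n → ℕ)
    (A : Set (Fin n → ℕ)) : Ideal (MvPolynomial ((j : Fin n) × Fin (iv j)) K) :=
  ⨆ a ∈ A, ∏ j, (Ideal.span (Set.range fun k : Fin (iv j) =>
      (X ⟨j, k⟩ : MvPolynomial ((j : Fin n) × Fin (iv j)) K))) ^ a j

/-- The `K`-algebra homomorphism `π : S^* → S`, `x_{jk} ↦ x_j`. -/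
noncomputable def piHom (K : Type*) [Field K] {n : ℕ} (iv : Fin n → ℕ) :
    MvPolynomial ((j : Fin n) × Fin (iv j)) K →ₐ[K] MvPolynomial (Fin n) K :=
  aeval fun p => X p.1

/-!
A monomial `x^u` of `S^*` lies in `P_1^{a_1} ⋯ P_n^{a_n}` iff `a ≤ blockSum u`, the vector of
block degrees `∑_k u_{jk}`. So `I^*` is the monomial ideal whose exponent set is the preimage under
`blockSum` of the upper closure of the exponents of `I`, and `I` itself is of the same shape with
`blockSum` replaced by the identity. The colon of two monomial ideals is the monomial ideal of the
colon of their exponent sets, and that exponent colon commutes with preimages under any monotone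
additive surjection; `blockSum` is surjective because every `i_j` is positive.
-/

def colonExponents {N : Type*} [Add N] [LE N] (T U : Set N) : Set N :=
  {d | ∀ u ∈ U, ∃ t ∈ T, t ≤ d + u}

theorem isUpperSet_colonExponents {N : Type*} [AddCommMonoid N] [PartialOrder N]
    [IsOrderedAddMonoid N] (T U : Set N) : IsUpperSet (colonExponents T U) := by
  intro d e hde hd u hu
  obtain ⟨t, ht, htd⟩ := hd u hu
  exact ⟨t, ht, htd.trans (by gcongr)⟩

theorem preimage_colonExponents {M N : Type*} [AddZeroClass M] [Preorder M]
    [AddCommMonoid N] [PartialOrder N] [IsOrderedAddMonoid N] {f : M →+ N} (hf : Monotone f)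
    (hsurj : Function.Surjective f) (T U : Set N) :
    colonExponents (f ⁻¹' upperClosure T) (f ⁻¹' upperClosure U) = f ⁻¹' colonExponents T U := by
  ext w
  simp only [colonExponents, Set.mem_preimage, Set.mem_ofPred_eq, SetLike.mem_coe,
    mem_upperClosure]
  constructor
  · intro h b hb
    obtain ⟨v, rfl⟩ := hsurj b
    obtain ⟨t, ⟨a, ha, hat⟩, htwv⟩ := h v ⟨f v, hb, le_rfl⟩
    exact ⟨a, ha, by simpa using hat.trans (hf htwv)⟩
  · rintro h v ⟨b, hb, hbv⟩
    obtain ⟨a, ha, hab⟩ := h b hb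
    exact ⟨w + v, ⟨a, ha, by simpa using hab.trans (by gcongr)⟩, le_rfl⟩

section MonomialSpan

variable (R : Type*) [CommSemiring R] {σ : Type*}

noncomputable def monomialSpan (T : Set (σ →₀ ℕ)) : Ideal (MvPolynomial σ R) :=
  Ideal.span ((fun s => monomial s 1) '' T)

variable {R}

theorem mem_monomialSpan {T : Set (σ →₀ ℕ)} {f : MvPolynomial σ R} :
    f ∈ monomialSpan R T ↔ ∀ d ∈ f.support, ∃ t ∈ T, t ≤ d :=
  mem_ideal_span_monomial_image

theorem monomial_mem_monomialSpan [Nontrivial R] {T : Set (σ →₀ ℕ)} (hT : IsUpperSet T)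
    {d : σ →₀ ℕ} : monomial d (1 : R) ∈ monomialSpan R T ↔ d ∈ T := by
  classical
  simp only [mem_monomialSpan, support_monomial, one_ne_zero, if_false,
    Finset.mem_singleton, forall_eq]
  exact ⟨fun ⟨t, ht, htd⟩ => hT htd ht, fun hd => ⟨d, hd, le_rfl⟩⟩

theorem monomialSpan_inj [Nontrivial R] {T U : Set (σ →₀ ℕ)} (hT : IsUpperSet T)
    (hU : IsUpperSet U) : monomialSpan R T = monomialSpan R U ↔ T = U := by
  refine ⟨fun h => ?_, congrArg _⟩
  ext d
  rw [← monomial_mem_monomialSpan (R := R) hT, ← monomial_mem_monomialSpan (R := R) hU, h]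

theorem monomialSpan_upperClosure (T : Set (σ →₀ ℕ)) :
    monomialSpan R (upperClosure T) = monomialSpan R T := by
  ext f
  simp only [mem_monomialSpan, SetLike.mem_coe, mem_upperClosure]
  refine forall₂_congr fun d _ => ⟨?_, fun ⟨t, ht, htd⟩ => ⟨t, ⟨t, ht, le_rfl⟩, htd⟩⟩
  rintro ⟨s, ⟨t, ht, hts⟩, hsd⟩
  exact ⟨t, ht, hts.trans hsd⟩

theorem monomialSpan_mul_le {T U V : Set (σ →₀ ℕ)} (h : ∀ t ∈ T, ∀ u ∈ U, t + u ∈ V) :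
    monomialSpan R T * monomialSpan R U ≤ monomialSpan R V := by
  rw [monomialSpan, monomialSpan, Ideal.span_mul_span, Ideal.span_le]
  rintro _ ⟨_, ⟨t, ht, rfl⟩, _, ⟨u, hu, rfl⟩, rfl⟩
  exact Ideal.subset_span ⟨t + u, h t ht u hu, by simp [monomial_mul]⟩

theorem colon_monomialSpan (T U : Set (σ →₀ ℕ)) :
    (monomialSpan R T).colon (monomialSpan R U) = monomialSpan R (colonExponents T U) := by
  apply le_antisymm
  · intro f hf
    rw [mem_monomialSpan]
    refine fun d hd => ⟨d, fun u hu => ?_, le_rfl⟩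
    have hfu : f * monomial u 1 ∈ monomialSpan R T :=
      Submodule.mem_colon.1 hf _ (Ideal.subset_span ⟨u, hu, rfl⟩)
    refine mem_monomialSpan.1 hfu (d + u) ?_
    rwa [mem_support_iff, coeff_mul_monomial, mul_one, ← mem_support_iff]
  · rw [monomialSpan, Ideal.span_le]
    rintro _ ⟨d, hd, rfl⟩
    refine Submodule.mem_colon.2 fun g hg => mem_monomialSpan.2 fun e he => ?_
    rw [smul_eq_mul, mem_support_iff, coeff_monomial_mul', ite_ne_right_iff, one_mul] at he
    obtain ⟨hde, he⟩ := he
    obtain ⟨u, hu, hue⟩ := mem_monomialSpan.1 hg (e - d) (mem_support_iff.2 he)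
    obtain ⟨t, ht, htu⟩ := hd u hu
    refine ⟨t, ht, htu.trans ?_⟩
    calc d + u ≤ d + (e - d) := by gcongr
      _ = e := add_tsub_cancel_of_le hde

theorem colon_monomialSpan_preimage {N : Type*} [AddCommMonoid N] [PartialOrder N]
    [IsOrderedAddMonoid N] {f : (σ →₀ ℕ) →+ N} (hf : Monotone f)
    (hsurj : Function.Surjective f) (T U : Set N) :
    (monomialSpan R (f ⁻¹' upperClosure T)).colon (monomialSpan R (f ⁻¹' upperClosure U)) =
      monomialSpan R (f ⁻¹' colonExponents T U) := by
  rw [colon_monomialSpan, preimage_colonExponents hf hsurj]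

end MonomialSpan

section Blocks

variable {ι : Type*} {κ : ι → Type*} [∀ i, Fintype (κ i)]

noncomputable def blockSum : ((Σ i, κ i) →₀ ℕ) →+ (ι → ℕ) where
  toFun u i := ∑ k, u ⟨i, k⟩
  map_zero' := by ext; simp
  map_add' u v := by ext; simp [Finset.sum_add_distrib]

theorem blockSum_apply (u : (Σ i, κ i) →₀ ℕ) (i : ι) : blockSum u i = ∑ k, u ⟨i, k⟩ := rfl

theorem le_blockSum (u : (Σ i, κ i) →₀ ℕ) (i : ι) (k : κ i) : u ⟨i, k⟩ ≤ blockSum u i :=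
  Finset.single_le_sum (f := fun k => u ⟨i, k⟩) (fun _ _ => Nat.zero_le _) (Finset.mem_univ k)

theorem blockSum_mono : Monotone (blockSum (κ := κ)) := fun _ _ h i =>
  Finset.sum_le_sum fun k _ => h ⟨i, k⟩

theorem blockSum_surjective [Finite ι] [∀ i, Nonempty (κ i)] :
    Function.Surjective (blockSum (κ := κ)) := by
  classical
  intro b
  refine ⟨Finsupp.equivFunOnFinite.symm fun p => if p.2 = Classical.arbitrary _ then b p.1 else 0,
    funext fun i => ?_⟩
  rw [blockSum_apply, Fintype.sum_eq_single (Classical.arbitrary (κ i)) fun k hk => by simp [hk]]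
  simp

variable (R : Type*) [CommSemiring R] (κ)

noncomputable def blockIdeal (i : ι) : Ideal (MvPolynomial (Σ i, κ i) R) :=
  Ideal.span (Set.range fun k : κ i => X ⟨i, k⟩)

variable {R κ}

theorem blockIdeal_pow_le (i : ι) (m : ℕ) :
    blockIdeal κ R i ^ m ≤ monomialSpan R {u | m ≤ blockSum u i} := by
  induction m with
  | zero =>
    rw [pow_zero, Ideal.one_eq_top, top_le_iff, Ideal.eq_top_iff_one, one_def]
    exact Ideal.subset_span ⟨0, Nat.zero_le _, rfl⟩
  | succ m ih =>
    have hX : blockIdeal κ R i ≤ monomialSpan R {u | 1 ≤ blockSum u i} := by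
      refine Ideal.span_le.2 ?_
      rintro _ ⟨k, rfl⟩
      exact Ideal.subset_span ⟨Finsupp.single ⟨i, k⟩ 1,
        by simpa using le_blockSum (Finsupp.single (⟨i, k⟩ : Σ i, κ i) 1) i k, rfl⟩
    rw [pow_succ]
    refine (Ideal.mul_mono ih hX).trans (monomialSpan_mul_le fun u hu v hv => ?_)
    simpa only [Set.mem_ofPred_eq, map_add, Pi.add_apply] using add_le_add hu hv

variable [Fintype ι]

theorem prod_blockIdeal_pow_le (a : ι → ℕ) :
    ∏ i, blockIdeal κ R i ^ a i ≤ monomialSpan R {u | a ≤ blockSum u} := by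
  intro f hf
  have hfi (i : ι) : f ∈ monomialSpan R {u | a i ≤ blockSum u i} :=
    blockIdeal_pow_le i (a i) (Ideal.prod_le_inf.trans (Finset.inf_le (Finset.mem_univ i)) hf)
  refine mem_monomialSpan.2 fun d hd => ⟨d, ?_, le_rfl⟩
  intro i
  obtain ⟨u, hu, hud⟩ := mem_monomialSpan.1 (hfi i) d hd
  exact hu.trans (blockSum_mono hud i)

theorem monomial_mem_prod_blockIdeal_pow {a : ι → ℕ} {u : (Σ i, κ i) →₀ ℕ}
    (h : a ≤ blockSum u) : monomial u (1 : R) ∈ ∏ i, blockIdeal κ R i ^ a i := by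
  rw [monomial_eq, C_1, one_mul, Finsupp.prod_fintype _ _ fun _ => pow_zero _, Fintype.prod_sigma]
  refine Ideal.prod_mem_prod fun i _ => Ideal.pow_le_pow_right (h i) ?_
  rw [blockSum_apply, ← Finset.prod_pow_eq_pow_sum]
  exact Ideal.prod_mem_prod fun k _ =>
    Ideal.pow_mem_pow (Ideal.subset_span (Set.mem_range_self k)) _

end Blocks

theorem expIdeal_eq_monomialSpan (K : Type*) [Field K] {n : ℕ} (iv : Fin n → ℕ)
    (A : Set (Fin n → ℕ)) : expIdeal K iv A = monomialSpan K (blockSum ⁻¹' upperClosure A) := by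
  apply le_antisymm
  · exact iSup₂_le fun a ha => (prod_blockIdeal_pow_le a).trans
      (Ideal.span_mono (Set.image_mono fun u hu => ⟨a, ha, hu⟩))
  · rw [monomialSpan, Ideal.span_le]
    rintro _ ⟨u, ⟨a, ha, hau⟩, rfl⟩
    exact (le_iSup₂_of_le a ha le_rfl : ∏ j, blockIdeal _ K j ^ a j ≤ expIdeal K iv A)
      (monomial_mem_prod_blockIdeal_pow hau)

theorem monIdeal_eq_monomialSpan (K : Type*) [Field K] {n : ℕ} (A : Set (Fin n → ℕ)) :
    monIdeal K A = monomialSpan K (Finsupp.coeFnAddHom ⁻¹' upperClosure A) := by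
  have hgen : (fun a : Fin n → ℕ => ∏ j, (X j : MvPolynomial (Fin n) K) ^ a j) =
      (fun s => monomial s 1) ∘ Finsupp.equivFunOnFinite.symm := by
    ext1 a
    simp [monomial_eq, Finsupp.prod_fintype]
  rw [monIdeal, hgen, Set.image_comp, ← monomialSpan, ← monomialSpan_upperClosure]
  congr 1
  ext d
  simp only [Set.mem_image, SetLike.mem_coe, mem_upperClosure, Set.mem_preimage]
  constructor
  · rintro ⟨_, ⟨a, ha, rfl⟩, had⟩
    exact ⟨a, ha, fun j => by simpa using Finsupp.le_def.1 had j⟩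
  · rintro ⟨a, ha, had⟩
    exact ⟨_, ⟨a, ha, rfl⟩, Finsupp.le_def.2 fun j => by simpa using had j⟩

/-- Lemma 1.1(v): `(I : J)^* = I^* : J^*`: if the monomial ideal generated by the monomials
`x^c`, `c ∈ C`, equals the colon ideal `I : J`, then its expansion is `I^* : J^*`. -/
theorem expIdeal_colon (K : Type*) [Field K] {n : ℕ} (iv : Fin n → ℕ)
    (hiv : ∀ j, 0 < iv j) (A B C : Set (Fin n → ℕ))
    (hC : monIdeal K C = Submodule.colon (monIdeal K A) (monIdeal K B)) :
    expIdeal K iv C = Submodule.colon (expIdeal K iv A) (expIdeal K iv B) := by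
  have : ∀ j, Nonempty (Fin (iv j)) := fun j => ⟨⟨0, hiv j⟩⟩
  have hcoe : Monotone (Finsupp.coeFnAddHom : (Fin n →₀ ℕ) →+ (Fin n → ℕ)) := fun _ _ h => h
  have hcoe_surj : Function.Surjective (Finsupp.coeFnAddHom : (Fin n →₀ ℕ) →+ (Fin n → ℕ)) :=
    Finsupp.equivFunOnFinite.surjective
  have hC' : (upperClosure C : Set (Fin n → ℕ)) = colonExponents A B := by
    simp only [monIdeal_eq_monomialSpan, colon_monomialSpan_preimage hcoe hcoe_surj] at hC
    refine hcoe_surj.preimage_injective ((monomialSpan_inj ?_ ?_).1 hC)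
    · exact (upperClosure C).upper.preimage hcoe
    · exact (isUpperSet_colonExponents A B).preimage hcoe
  simp only [expIdeal_eq_monomialSpan,
    colon_monomialSpan_preimage blockSum_mono blockSum_surjective, hC']
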